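/- Exponential mechanism tail bound from the sandwich: let β > 0 and suppose, for constants 0 < c_1 ≤ c_2, c_3, s > 0 and τ with c_1τ/2 - s - c_3 > 0, that (t - c_3 - s)/(2c_2) ≤ O(x) for all ‖x - θ‖ ≥ t and O(x) ≤ (r + c_3 + s)/(c_1/2) for all ‖x - θ‖ ≤ r, with B(θ, c_1τ/2 - s - c_3) ⊆ A_τ ⊆ B(θ, 2c_2τ + s + c_3), where A_τ = {O ≤ τ}. Then for any 0 < r ≤ c_1τ/2 - s - c_3 and any t < 2c_2τ + s + c_3, the measure with density proportional to 1{x ∈ A_τ}e^{-βO(x)} assigns to {‖x - θ‖ ≥ t} probability at most exp(β[(c_1/2 + 2c_2)(c_3+s)/(c_1 c_2) - t/(2c_2) + 2r/c_1]) · ((2c_2τ + s + c_3)^d - t^d)/r^d. -/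
import Mathlib


open MeasureTheory Real

noncomputable section

variable {d : ℕ}

/-- The probability assigned to a set `E` by the exponential mechanism with cost `O`,
truncation region `Aτ`, and inverse temperature `β`, with respect to Lebesgue measure. -/
def emProb (O : EuclideanSpace ℝ (Fin d) → ℝ) (Aτ : Set (EuclideanSpace ℝ (Fin d))) (β : ℝ)
    (E : Set (EuclideanSpace ℝ (Fin d))) : ENNReal :=
  (∫⁻ x in E ∩ Aτ, ENNReal.ofReal (exp (-β * O x))) /
    (∫⁻ x in Aτ, ENNReal.ofReal (exp (-β * O x)))

/-- Exponential mechanism tail bound from the accuracy sandwich: under the outlyingness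
lower/upper bounds and the ball sandwich for the level set `A_τ`, for any
`0 < r ≤ c₁τ/2 - s - c₃` and `0 ≤ t < 2c₂τ + s + c₃`, the exponential mechanism assigns to
`{x : ‖x - θ‖ ≥ t}` probability at most
`exp(β[(c₁/2 + 2c₂)(c₃+s)/(c₁c₂) - t/(2c₂) + 2r/c₁]) ((2c₂τ + s + c₃)^d - t^d)/r^d`. -/
theorem emProb_tail_bound (hd : 0 < d)
    (O : EuclideanSpace ℝ (Fin d) → ℝ) (hOmeas : Measurable O) (hOnonneg : ∀ x, 0 ≤ O x)
    (θ : EuclideanSpace ℝ (Fin d)) (β c₁ c₂ c₃ s τ : ℝ)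
    (hβ : 0 < β) (hc₁ : 0 < c₁) (hc₁₂ : c₁ ≤ c₂) (hc₃ : 0 < c₃) (hs : 0 < s) (hτ : 0 < τ)
    (hlevel : 0 < c₁ * τ / 2 - s - c₃)
    (hball₁ : Metric.closedBall θ (c₁ * τ / 2 - s - c₃) ⊆ {x | O x ≤ τ})
    (hball₂ : {x | O x ≤ τ} ⊆ Metric.closedBall θ (2 * c₂ * τ + s + c₃)) :
    ∀ r t : ℝ, 0 < r → r ≤ c₁ * τ / 2 - s - c₃ → 0 ≤ t → t < 2 * c₂ * τ + s + c₃ →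
      (∀ x, t ≤ dist x θ → (t - c₃ - s) / (2 * c₂) ≤ O x) →
      (∀ x, dist x θ ≤ r → O x ≤ (r + c₃ + s) / (c₁ / 2)) →
      emProb O {x | O x ≤ τ} β {x | t ≤ dist x θ} ≤
        ENNReal.ofReal
          (exp (β * ((c₁ / 2 + 2 * c₂) * (c₃ + s) / (c₁ * c₂) - t / (2 * c₂) + 2 * r / c₁)) *
            (((2 * c₂ * τ + s + c₃) ^ d - t ^ d) / r ^ d)) := by
  intro r t hr hrρ ht htR hlow hupp
  haveI : Nonempty (Fin d) := ⟨⟨0, hd⟩⟩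
  haveI : Nontrivial (EuclideanSpace ℝ (Fin d)) := inferInstance
  have hc₂ : 0 < c₂ := lt_of_lt_of_le hc₁ hc₁₂
  set R : ℝ := 2 * c₂ * τ + s + c₃ with hR
  set L : ℝ := (t - c₃ - s) / (2 * c₂) with hL
  set U : ℝ := (r + c₃ + s) / (c₁ / 2) with hU
  set Δ : ℝ := (c₁ / 2 + 2 * c₂) * (c₃ + s) / (c₁ * c₂) - t / (2 * c₂) + 2 * r / c₁ with hΔ
  set K : ENNReal := volume (Metric.ball (0 : EuclideanSpace ℝ (Fin d)) 1) with hK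
  have hK0 : K ≠ 0 := (Metric.measure_ball_pos _ _ one_pos).ne'
  have hKtop : K ≠ ⊤ := measure_ball_lt_top.ne
  have hRpos : 0 < R := by rw [hR]; positivity
  have hfin : Module.finrank ℝ (EuclideanSpace ℝ (Fin d)) = d := finrank_euclideanSpace_fin
  have htd : t ^ d ≤ R ^ d := pow_le_pow_left₀ ht htR.le d
  have hX : (0:ℝ) ≤ R ^ d - t ^ d := sub_nonneg.2 htd
  have hfmeas : Measurable fun x => ENNReal.ofReal (exp (-β * O x)) :=
    (hOmeas.const_mul (-β)).exp.ennreal_ofReal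
  -- numerator bound
  have hvolS : volume ({x : EuclideanSpace ℝ (Fin d) | t ≤ dist x θ} ∩ {x | O x ≤ τ}) ≤
      ENNReal.ofReal (R ^ d - t ^ d) * K := by
    have hsub : {x : EuclideanSpace ℝ (Fin d) | t ≤ dist x θ} ∩ {x | O x ≤ τ} ⊆
        Metric.closedBall θ R \ Metric.ball θ t := by
      rintro x ⟨hx1, hx2⟩
      exact ⟨hball₂ hx2, fun hball => absurd (Metric.mem_ball.1 hball) (not_lt.2 hx1)⟩
    refine (measure_mono hsub).trans_eq ?_
    rw [measure_diff (Metric.ball_subset_closedBall.trans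
          (Metric.closedBall_subset_closedBall htR.le))
        measurableSet_ball.nullMeasurableSet measure_ball_lt_top.ne,
      volume.addHaar_closedBall θ hRpos.le, volume.addHaar_ball θ ht, hfin, ← hK,
      ENNReal.ofReal_sub _ (pow_nonneg ht d), ENNReal.sub_mul (fun _ _ => hKtop)]
  have hN : (∫⁻ x in {x : EuclideanSpace ℝ (Fin d) | t ≤ dist x θ} ∩ {x | O x ≤ τ},
      ENNReal.ofReal (exp (-β * O x))) ≤
      ENNReal.ofReal (exp (-β * L)) * (ENNReal.ofReal (R ^ d - t ^ d) * K) := by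
    calc (∫⁻ x in {x : EuclideanSpace ℝ (Fin d) | t ≤ dist x θ} ∩ {x | O x ≤ τ},
        ENNReal.ofReal (exp (-β * O x)))
        ≤ ∫⁻ _ in {x : EuclideanSpace ℝ (Fin d) | t ≤ dist x θ} ∩ {x | O x ≤ τ},
          ENNReal.ofReal (exp (-β * L)) := by
          refine setLIntegral_mono measurable_const fun x hx => ?_
          refine ENNReal.ofReal_le_ofReal (exp_le_exp.2 ?_)
          have := hlow x hx.1
          nlinarith
      _ = ENNReal.ofReal (exp (-β * L)) *
          volume ({x : EuclideanSpace ℝ (Fin d) | t ≤ dist x θ} ∩ {x | O x ≤ τ}) :=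
          setLIntegral_const _ _
      _ ≤ _ := mul_le_mul_right hvolS _
  -- denominator bound
  have hD : ENNReal.ofReal (exp (-β * U)) * (ENNReal.ofReal (r ^ d) * K) ≤
      ∫⁻ x in {x : EuclideanSpace ℝ (Fin d) | O x ≤ τ}, ENNReal.ofReal (exp (-β * O x)) := by
    have hsub : Metric.closedBall θ r ⊆ {x : EuclideanSpace ℝ (Fin d) | O x ≤ τ} :=
      (Metric.closedBall_subset_closedBall hrρ).trans hball₁
    calc ENNReal.ofReal (exp (-β * U)) * (ENNReal.ofReal (r ^ d) * K)
        = ENNReal.ofReal (exp (-β * U)) * volume (Metric.closedBall θ r) := by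
          rw [volume.addHaar_closedBall θ hr.le, hfin, ← hK]
      _ = ∫⁻ _ in Metric.closedBall θ r, ENNReal.ofReal (exp (-β * U)) :=
          (setLIntegral_const _ _).symm
      _ ≤ ∫⁻ x in Metric.closedBall θ r, ENNReal.ofReal (exp (-β * O x)) := by
          refine setLIntegral_mono hfmeas fun x hx => ?_
          refine ENNReal.ofReal_le_ofReal (exp_le_exp.2 ?_)
          have := hupp x (Metric.mem_closedBall.1 hx)
          nlinarith
      _ ≤ _ := lintegral_mono_set hsub
  -- combine
  have hB0 : ENNReal.ofReal (exp (-β * U)) * (ENNReal.ofReal (r ^ d) * K) ≠ 0 :=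
    mul_ne_zero (ENNReal.ofReal_pos.2 (exp_pos _)).ne'
      (mul_ne_zero (ENNReal.ofReal_pos.2 (pow_pos hr d)).ne' hK0)
  have hBtop : ENNReal.ofReal (exp (-β * U)) * (ENNReal.ofReal (r ^ d) * K) ≠ ⊤ :=
    ENNReal.mul_ne_top ENNReal.ofReal_ne_top (ENNReal.mul_ne_top ENNReal.ofReal_ne_top hKtop)
  refine le_trans (ENNReal.div_le_div hN hD) ?_
  rw [ENNReal.div_le_iff hB0 hBtop]
  have hexp : exp (β * Δ) * exp (-β * U) = exp (-β * L) := by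
    rw [← exp_add]
    congr 1
    rw [hΔ, hU, hL]
    field_simp
    ring
  have key : exp (-β * L) * (R ^ d - t ^ d) =
      exp (β * Δ) * ((R ^ d - t ^ d) / r ^ d) * (exp (-β * U) * r ^ d) := by
    have hYne : (r : ℝ) ^ d ≠ 0 := (pow_pos hr d).ne'
    have : exp (β * Δ) * ((R ^ d - t ^ d) / r ^ d) * (exp (-β * U) * r ^ d)
        = (exp (β * Δ) * exp (-β * U)) * ((R ^ d - t ^ d) / r ^ d * r ^ d) := by ring
    rw [this, hexp, div_mul_cancel₀ _ hYne]
  have h1 : (0:ℝ) ≤ exp (β * Δ) * ((R ^ d - t ^ d) / r ^ d) :=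
    mul_nonneg (exp_pos _).le (div_nonneg hX (pow_nonneg hr.le d))
  refine le_of_eq ?_
  calc ENNReal.ofReal (exp (-β * L)) * (ENNReal.ofReal (R ^ d - t ^ d) * K)
      = ENNReal.ofReal (exp (-β * L) * (R ^ d - t ^ d)) * K := by
        rw [ENNReal.ofReal_mul (exp_pos _).le, mul_assoc]
    _ = ENNReal.ofReal (exp (β * Δ) * ((R ^ d - t ^ d) / r ^ d) * (exp (-β * U) * r ^ d)) * K := by
        rw [key]
    _ = ENNReal.ofReal (exp (β * Δ) * ((R ^ d - t ^ d) / r ^ d)) *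
        (ENNReal.ofReal (exp (-β * U)) * (ENNReal.ofReal (r ^ d) * K)) := by
        rw [ENNReal.ofReal_mul h1, ENNReal.ofReal_mul (exp_pos _).le, mul_assoc, mul_assoc,
          ENNReal.ofReal_mul (exp_pos _).le]
        ring

end
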